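/- arXiv:2108.06603 — 4 statements merged into one kernel-verified Lean document; each statement's English description precedes it below -/
import Mathlib

section
/- Let F = (W, O, R, *) be a Routley–Meyer frame. Then the complex algebra F⁺ = (P↑(W), ∩, ∪, ∘꜀, →꜀, ∼꜀, O, W, ∅), where P↑(W) is the set of up-sets of W, is a relevant algebra: the up-sets form a bounded distributive lattice under ∩ and ∪ with top W and bottom ∅, and for all up-sets a, b, c: a ∘꜀ (b ∪ c) = (a ∘꜀ b) ∪ (a ∘꜀ c); (b ∪ c) ∘꜀ a = (b ∘꜀ a) ∪ (c ∘꜀ a); ∼꜀(a ∪ b) = ∼꜀a ∩ ∼꜀b; ∼꜀(a ∩ b) = ∼꜀a ∪ ∼꜀b; ∼꜀W = ∅ and ∼꜀∅ = W; a ∘꜀ ∅ = ∅ ∘꜀ a = ∅; O ∘꜀ a = a; and a ∘꜀ b ⊆ c iff a ⊆ b →꜀ c. -/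
/-- A Routley–Meyer frame: a set of worlds `W` with a set `O` of normal states,
a ternary accessibility relation `R`, and the Routley star `star`,
satisfying the six Routley–Meyer conditions with respect to the preorder
`u ≼ v ↔ ∃ o ∈ O, R o u v`. -/
structure RMFrame (W : Type*) where
  O : Set W
  R : W → W → W → Prop
  star : W → W
  cond1 : ∀ x, ∃ o ∈ O, R o x x
  cond2 : ∀ x y u v, (∃ o ∈ O, R o x y) → R y u v → R x u v
  cond3 : ∀ x y u v, (∃ o ∈ O, R o x y) → R u y v → R u x v
  cond4 : ∀ x y u v, (∃ o ∈ O, R o x y) → R u v x → R u v y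
  cond5 : ∀ x y, (∃ o ∈ O, R o x y) → ∃ o ∈ O, R o (star y) (star x)
  cond6 : ∀ o o', o ∈ O → (∃ o'' ∈ O, R o'' o o') → o' ∈ O

namespace RMFrame

variable {W : Type*} (F : RMFrame W)

/-- The preorder `u ≼ v` on a Routley–Meyer frame. -/
def pre (u v : W) : Prop := ∃ o ∈ F.O, F.R o u v

/-- A subset is an up-set if it is upward closed with respect to `≼`. -/
def IsUpset (Y : Set W) : Prop := ∀ u v, u ∈ Y → F.pre u v → v ∈ Y

/-- Complex implication: `Y →꜀ Z`. -/
def cimp (Y Z : Set W) : Set W := {x | ∀ y z, F.R x y z → y ∈ Y → z ∈ Z}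

/-- Complex fusion: `Y ∘꜀ Z`. -/
def cfus (Y Z : Set W) : Set W := {x | ∃ y ∈ Y, ∃ z ∈ Z, F.R y z x}

/-- Complex relevant negation: `∼꜀Y`. -/
def cneg (Y : Set W) : Set W := {x | F.star x ∉ Y}

/-- The second residual of fusion: `X ↠꜀ Z`. -/
def cres (X Z : Set W) : Set W := {w | ∀ v u, F.R v w u → v ∈ X → u ∈ Z}

end RMFrame

/-- the complex algebra of a Routley–Meyer frame is a relevant
algebra: up-sets are closed under the operations, form a bounded distributive
lattice under `∩` and `∪` with top `univ` and bottom `∅`, and all the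
relevant algebra axioms hold. -/
theorem complex_algebra_is_relevant_algebra {W : Type*} [Nonempty W]
    (F : RMFrame W) :
    (∀ a b : Set W, F.IsUpset a → F.IsUpset b → F.IsUpset (a ∩ b)) ∧
    (∀ a b : Set W, F.IsUpset a → F.IsUpset b → F.IsUpset (a ∪ b)) ∧
    F.IsUpset (Set.univ : Set W) ∧
    F.IsUpset (∅ : Set W) ∧
    (∀ a b : Set W, F.IsUpset a → F.IsUpset b → F.IsUpset (F.cfus a b)) ∧
    (∀ a b : Set W, F.IsUpset a → F.IsUpset b → F.IsUpset (F.cimp a b)) ∧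
    (∀ a : Set W, F.IsUpset a → F.IsUpset (F.cneg a)) ∧
    (∀ a b c : Set W, F.IsUpset a → F.IsUpset b → F.IsUpset c →
      a ∩ (b ∪ c) = (a ∩ b) ∪ (a ∩ c)) ∧
    (∀ a b c : Set W, F.IsUpset a → F.IsUpset b → F.IsUpset c →
      F.cfus a (b ∪ c) = F.cfus a b ∪ F.cfus a c) ∧
    (∀ a b c : Set W, F.IsUpset a → F.IsUpset b → F.IsUpset c →
      F.cfus (b ∪ c) a = F.cfus b a ∪ F.cfus c a) ∧
    (∀ a b : Set W, F.IsUpset a → F.IsUpset b →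
      F.cneg (a ∪ b) = F.cneg a ∩ F.cneg b) ∧
    (∀ a b : Set W, F.IsUpset a → F.IsUpset b →
      F.cneg (a ∩ b) = F.cneg a ∪ F.cneg b) ∧
    F.cneg Set.univ = (∅ : Set W) ∧
    F.cneg ∅ = (Set.univ : Set W) ∧
    (∀ a : Set W, F.IsUpset a → F.cfus a ∅ = ∅) ∧
    (∀ a : Set W, F.IsUpset a → F.cfus ∅ a = ∅) ∧
    (∀ a : Set W, F.IsUpset a → F.cfus F.O a = a) ∧
    (∀ a b c : Set W, F.IsUpset a → F.IsUpset b → F.IsUpset c →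
      (F.cfus a b ⊆ c ↔ a ⊆ F.cimp b c)) := by
  refine ⟨?_, ?_, ?_, ?_, ?_, ?_, ?_, ?_, ?_, ?_, ?_, ?_, ?_, ?_, ?_, ?_, ?_, ?_⟩
  · intro a b ha hb u v hu h; exact ⟨ha u v hu.1 h, hb u v hu.2 h⟩
  · intro a b ha hb u v hu h
    cases hu with
    | inl h' => exact Or.inl (ha u v h' h)
    | inr h' => exact Or.inr (hb u v h' h)
  · intro u v _ _; trivial
  · intro u v h _; exact h.elim
  · rintro a b ha hb u v ⟨y, hy, z, hz, hR⟩ h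
    exact ⟨y, hy, z, hz, F.cond4 u v y z h hR⟩
  · intro a b ha hb u v hu h y z hR hy
    exact hu y z (F.cond2 u v y z h hR) hy
  · intro a ha u v hu h hmem
    exact hu (ha _ _ hmem (F.cond5 u v h))
  · intro a b c _ _ _; exact Set.inter_union_distrib_left a b c
  · rintro a b c _ _ _
    ext x; constructor
    · rintro ⟨y, hy, z, hz, hR⟩
      cases hz with
      | inl h => exact Or.inl ⟨y, hy, z, h, hR⟩
      | inr h => exact Or.inr ⟨y, hy, z, h, hR⟩
    · rintro (⟨y, hy, z, hz, hR⟩ | ⟨y, hy, z, hz, hR⟩)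
      · exact ⟨y, hy, z, Or.inl hz, hR⟩
      · exact ⟨y, hy, z, Or.inr hz, hR⟩
  · rintro a b c _ _ _
    ext x; constructor
    · rintro ⟨y, hy, z, hz, hR⟩
      cases hy with
      | inl h => exact Or.inl ⟨y, h, z, hz, hR⟩
      | inr h => exact Or.inr ⟨y, h, z, hz, hR⟩
    · rintro (⟨y, hy, z, hz, hR⟩ | ⟨y, hy, z, hz, hR⟩)
      · exact ⟨y, Or.inl hy, z, hz, hR⟩
      · exact ⟨y, Or.inr hy, z, hz, hR⟩
  · intro a b _ _
    ext x
    simp [RMFrame.cneg, not_or]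
  · intro a b _ _
    ext x
    simp [RMFrame.cneg]; tauto
  · ext x; simp [RMFrame.cneg]
  · ext x; simp [RMFrame.cneg]
  · intro a _; ext x
    simp only [RMFrame.cfus, Set.mem_empty_iff_false, Set.mem_setOf_eq]
    constructor
    · rintro ⟨y, _, z, hz, _⟩; exact hz
    · intro h; exact h.elim
  · intro a _; ext x
    simp only [RMFrame.cfus, Set.mem_empty_iff_false, Set.mem_setOf_eq]
    constructor
    · rintro ⟨y, hy, _⟩; exact hy
    · intro h; exact h.elim
  · intro a ha; ext x; constructor
    · rintro ⟨o, ho, z, hz, hR⟩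
      exact ha z x hz ⟨o, ho, hR⟩
    · intro hx
      obtain ⟨o, ho, hR⟩ := F.cond1 x
      exact ⟨o, ho, x, hx, hR⟩
  · intro a b c _ _ _
    constructor
    · intro h x hx y z hR hy
      exact h ⟨x, hx, y, hy, hR⟩
    · rintro h x ⟨y, hy, z, hz, hR⟩
      exact h hy z x hR hz
end

section
/- Let A be a perfect relevant algebra and let b, c ∈ J∞(A) be completely join-irreducible elements. Then there exists a completely join-irreducible j ∈ J∞(A) with j ≤ t and c ≤ j ∘ b if and only if c ≤ b. (Equivalently: the relation ≼ on the prime structure A_•, defined by b ≼ c iff there exists j ∈ O_t with R∘ j b c, coincides with the dual lattice order ≥ restricted to J∞(A).) -/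
/-- Completely join-irreducible element of a complete lattice:
whenever `a = ⋁ S`, then `a = s` for some `s ∈ S`. -/
def CompletelyJoinIrreducible {A : Type*} [CompleteLattice A] (a : A) : Prop :=
  ∀ S : Set A, a = sSup S → ∃ s ∈ S, a = s

/-- Completely meet-irreducible element of a complete lattice:
whenever `a = ⋀ S`, then `a = s` for some `s ∈ S`. -/
def CompletelyMeetIrreducible {A : Type*} [CompleteLattice A] (a : A) : Prop :=
  ∀ S : Set A, a = sInf S → ∃ s ∈ S, a = s

/-- A perfect relevant algebra: a complete, completely distributive lattice
which is join-generated by its completely join-irreducible elements and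
meet-generated by its completely meet-irreducible elements, equipped with
fusion `fus`, relevant implication `rimp`, relevant negation `rneg` and the
relevant truth constant `rt`, satisfying the relevant algebra axioms together
with the complete (anti)additivity laws. -/
class PerfectRelevantAlgebra (A : Type*) extends CompletelyDistribLattice A where
  fus : A → A → A
  rimp : A → A → A
  rneg : A → A
  rt : A
  fus_sup_left : ∀ a b c : A, fus a (b ⊔ c) = fus a b ⊔ fus a c
  fus_sup_right : ∀ a b c : A, fus (b ⊔ c) a = fus b a ⊔ fus c a
  rneg_sup : ∀ a b : A, rneg (a ⊔ b) = rneg a ⊓ rneg b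
  rneg_inf : ∀ a b : A, rneg (a ⊓ b) = rneg a ⊔ rneg b
  rneg_top : rneg ⊤ = ⊥
  rneg_bot : rneg ⊥ = ⊤
  fus_bot : ∀ a : A, fus a ⊥ = ⊥
  bot_fus : ∀ a : A, fus ⊥ a = ⊥
  rt_fus : ∀ a : A, fus rt a = a
  fus_le_iff : ∀ a b c : A, fus a b ≤ c ↔ a ≤ rimp b c
  fus_sSup_left : ∀ (S : Set A) (a : A), fus (sSup S) a = ⨆ s ∈ S, fus s a
  fus_sSup_right : ∀ (S : Set A) (a : A), fus a (sSup S) = ⨆ s ∈ S, fus a s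
  rimp_sSup_left : ∀ (S : Set A) (a : A), rimp (sSup S) a = ⨅ s ∈ S, rimp s a
  rimp_sInf_right : ∀ (S : Set A) (a : A), rimp a (sInf S) = ⨅ s ∈ S, rimp a s
  rneg_sSup : ∀ S : Set A, rneg (sSup S) = ⨅ s ∈ S, rneg s
  rneg_sInf : ∀ S : Set A, rneg (sInf S) = ⨆ s ∈ S, rneg s
  join_generated : ∀ a : A, a = sSup {j : A | CompletelyJoinIrreducible j ∧ j ≤ a}
  meet_generated : ∀ a : A, a = sInf {m : A | CompletelyMeetIrreducible m ∧ a ≤ m}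

namespace PerfectRelevantAlgebra

variable {A : Type*} [PerfectRelevantAlgebra A]

/-- The right adjoint `∼♯` of relevant negation: `∼♯ a = ⋁{b : a ≤ ∼b}`. -/
def rnegSharp (a : A) : A := sSup {b : A | a ≤ rneg b}

/-- The left adjoint `∼♭` of relevant negation: `∼♭ b = ⋀{a : ∼a ≤ b}`. -/
def rnegFlat (b : A) : A := sInf {a : A | rneg a ≤ b}

/-- `λ(m) = ⋀{u : u ≰ m}`. -/
def lam (m : A) : A := sInf {u : A | ¬ u ≤ m}

end PerfectRelevantAlgebra

open PerfectRelevantAlgebra in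
/-- for completely join-irreducible `b, c` in a perfect relevant
algebra there is a completely join-irreducible `j ≤ t` with `c ≤ j ∘ b` iff
`c ≤ b`; i.e., the relation `≼` on the prime structure coincides with the dual
lattice order restricted to `J∞(A)`. -/
theorem prime_structure_order {A : Type*} [PerfectRelevantAlgebra A]
    (b c : A) (hb : CompletelyJoinIrreducible b) (hc : CompletelyJoinIrreducible c) :
    (∃ j : A, CompletelyJoinIrreducible j ∧ j ≤ rt ∧ c ≤ fus j b) ↔ c ≤ b := by
  constructor
  · rintro ⟨j, _, hjt, hcjb⟩
    have hmono : fus j b ≤ fus (rt : A) b := by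
      have : fus (j ⊔ rt) b = fus j b ⊔ fus (rt : A) b := fus_sup_right b j rt
      rw [sup_eq_right.mpr hjt] at this
      exact this ▸ le_sup_left
    calc c ≤ fus j b := hcjb
      _ ≤ fus (rt : A) b := hmono
      _ = b := rt_fus b
  · intro hcb
    set S : Set A := {j : A | CompletelyJoinIrreducible j ∧ j ≤ rt} with hS
    have hrt : (rt : A) = sSup S := join_generated rt
    have hb' : b = ⨆ s ∈ S, fus s b := by
      conv_lhs => rw [← rt_fus b, hrt]
      exact fus_sSup_left S b
    have hcsup : c = ⨆ s ∈ S, c ⊓ fus s b := by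
      conv_lhs => rw [(inf_eq_left.mpr hcb).symm, hb']
      simp [inf_iSup_eq]
    have hcsup' : c = sSup ((fun s => c ⊓ fus s b) '' S) := by
      rw [sSup_image]; exact hcsup
    obtain ⟨x, hx, hcx⟩ := hc _ hcsup'
    obtain ⟨j, hjS, rfl⟩ := hx
    exact ⟨j, hjS.1, hjS.2, hcx.le.trans inf_le_right⟩
end

section
/- For every perfect relevant algebra A, the prime structure A_• = (J∞(A), O_t, R∘, ∗∼) is a Routley–Meyer frame: with ≼ defined by b ≼ c iff there exists j ∈ O_t with R∘ j b c, the six conditions hold: (1) x ≼ x; (2) if x ≼ y and R∘ y u v then R∘ x u v; (3) if x ≼ y and R∘ u y v then R∘ u x v; (4) if x ≼ y and R∘ u v x then R∘ u v y; (5) if x ≼ y then y^{∗∼} ≼ x^{∗∼}; (6) O_t is upward closed with respect to ≼; and moreover ∗∼ maps J∞(A) into J∞(A). -/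
namespace PerfectRelevantAlgebra

variable {A : Type*} [PerfectRelevantAlgebra A]

/-- The ternary relation `R∘` of the prime structure: `R∘ a b c ↔ c ≤ a ∘ b`. -/
def primeR (a b c : A) : Prop := c ≤ fus a b

/-- The preorder of the prime structure:
`b ≼ c` iff `R∘ j b c` for some completely join-irreducible `j ≤ t`. -/
def primePre (b c : A) : Prop :=
  ∃ j : A, CompletelyJoinIrreducible j ∧ j ≤ rt ∧ primeR j b c

/-- The star of the prime structure: `a^{∗∼} = λ(∼♯ a)`. -/
def primeStar (a : A) : A := lam (rnegSharp a)

end PerfectRelevantAlgebra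

namespace PerfectRelevantAlgebra

variable {A : Type*} [PerfectRelevantAlgebra A]

lemma cji_le_sSup {j : A} (hj : CompletelyJoinIrreducible j) {S : Set A}
    (h : j ≤ sSup S) : ∃ s ∈ S, j ≤ s := by
  have h1 : j = sSup ((fun s => j ⊓ s) '' S) := by
    rw [sSup_image, ← inf_sSup_eq]
    exact (inf_eq_left.mpr h).symm
  obtain ⟨x, ⟨s, hs, rfl⟩, he⟩ := hj _ h1
  exact ⟨s, hs, inf_eq_left.mp he.symm⟩

lemma cmi_sInf_le {m : A} (hm : CompletelyMeetIrreducible m) {S : Set A}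
    (h : sInf S ≤ m) : ∃ s ∈ S, s ≤ m := by
  have h1 : m = sInf ((fun s => m ⊔ s) '' S) := by
    rw [sInf_image, ← sup_sInf_eq]
    exact (sup_eq_left.mpr h).symm
  obtain ⟨x, ⟨s, hs, rfl⟩, he⟩ := hm _ h1
  exact ⟨s, hs, sup_eq_left.mp he.symm⟩

lemma fus_mono_left {a b : A} (c : A) (h : a ≤ b) : fus a c ≤ fus b c := by
  have h1 := fus_sup_right c a b
  rw [sup_eq_right.mpr h] at h1
  rw [h1]; exact le_sup_left

lemma fus_mono_right {a b : A} (c : A) (h : a ≤ b) : fus c a ≤ fus c b := by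
  have h1 := fus_sup_left c a b
  rw [sup_eq_right.mpr h] at h1
  rw [h1]; exact le_sup_left

lemma rneg_antitone {a b : A} (h : a ≤ b) : rneg b ≤ rneg a := by
  have h1 := rneg_sup a b
  rw [sup_eq_right.mpr h] at h1
  rw [h1]; exact inf_le_left

lemma le_rnegSharp {a b : A} : b ≤ rnegSharp a ↔ a ≤ rneg b := by
  constructor
  · intro h
    have h2 : a ≤ rneg (rnegSharp a) := by
      rw [rnegSharp, rneg_sSup]
      exact le_iInf₂ fun b' hb' => hb'
    exact h2.trans (rneg_antitone h)
  · intro h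
    exact le_sSup h

lemma primePre_le {x y : A} (h : primePre x y) : y ≤ x := by
  obtain ⟨j, _, hjt, hr⟩ := h
  calc y ≤ fus j x := hr
    _ ≤ fus rt x := fus_mono_left x hjt
    _ = x := rt_fus x

lemma le_primePre {x y : A} (hy : CompletelyJoinIrreducible y) (h : y ≤ x) :
    primePre x y := by
  have hx : y ≤ sSup ((fun j => fus j x) ''
      {j : A | CompletelyJoinIrreducible j ∧ j ≤ rt}) := by
    rw [sSup_image, ← fus_sSup_left, ← join_generated, rt_fus]
    exact h
  obtain ⟨z, ⟨j, ⟨hj1, hj2⟩, rfl⟩, hz⟩ := cji_le_sSup hy hx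
  exact ⟨j, hj1, hj2, hz⟩

lemma cmi_rnegSharp {a : A} (ha : CompletelyJoinIrreducible a) :
    CompletelyMeetIrreducible (rnegSharp a) := by
  intro S hS
  have h1 : a ≤ rneg (rnegSharp a) := le_rnegSharp.mp le_rfl
  rw [hS, rneg_sInf, ← sSup_image] at h1
  obtain ⟨z, ⟨s, hs, rfl⟩, hz⟩ := cji_le_sSup ha h1
  refine ⟨s, hs, le_antisymm ?_ (le_rnegSharp.mpr hz)⟩
  rw [hS]; exact sInf_le hs

lemma lam_not_le {m : A} (hm : CompletelyMeetIrreducible m) : ¬ lam m ≤ m := by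
  intro h
  obtain ⟨u, hu, hum⟩ :=
    cmi_sInf_le hm (show sInf {u : A | ¬ u ≤ m} ≤ m from h)
  exact hu hum

lemma cji_lam {m : A} (h : ¬ lam m ≤ m) : CompletelyJoinIrreducible (lam m) := by
  intro S hS
  by_cases hc : ∃ s ∈ S, ¬ s ≤ m
  · obtain ⟨s, hs, hsm⟩ := hc
    refine ⟨s, hs, le_antisymm (sInf_le hsm) ?_⟩
    rw [hS]; exact le_sSup hs
  · push_neg at hc
    have h2 : lam m ≤ m := by rw [hS]; exact sSup_le hc
    exact absurd h2 h

lemma cji_primeStar {a : A} (ha : CompletelyJoinIrreducible a) :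
    CompletelyJoinIrreducible (primeStar a) :=
  cji_lam (lam_not_le (cmi_rnegSharp ha))

lemma lam_mono {m m' : A} (h : m ≤ m') : lam m ≤ lam m' :=
  sInf_le_sInf fun _ hu hle => hu (hle.trans h)

lemma primeStar_antitone {x y : A} (h : x ≤ y) : primeStar y ≤ primeStar x :=
  lam_mono (sSup_le_sSup fun _ hb => h.trans hb)

end PerfectRelevantAlgebra

open PerfectRelevantAlgebra in
/-- the prime structure of a perfect relevant algebra is a
Routley–Meyer frame: the six frame conditions hold on `J∞(A)`
and `∗∼` maps `J∞(A)` into `J∞(A)`. -/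
theorem prime_structure_is_RM_frame {A : Type*} [PerfectRelevantAlgebra A] :
    (∀ x : A, CompletelyJoinIrreducible x → primePre x x) ∧
    (∀ x y u v : A, CompletelyJoinIrreducible x → CompletelyJoinIrreducible y →
      CompletelyJoinIrreducible u → CompletelyJoinIrreducible v →
      primePre x y → primeR y u v → primeR x u v) ∧
    (∀ x y u v : A, CompletelyJoinIrreducible x → CompletelyJoinIrreducible y →
      CompletelyJoinIrreducible u → CompletelyJoinIrreducible v →
      primePre x y → primeR u y v → primeR u x v) ∧
    (∀ x y u v : A, CompletelyJoinIrreducible x → CompletelyJoinIrreducible y →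
      CompletelyJoinIrreducible u → CompletelyJoinIrreducible v →
      primePre x y → primeR u v x → primeR u v y) ∧
    (∀ x y : A, CompletelyJoinIrreducible x → CompletelyJoinIrreducible y →
      primePre x y → primePre (primeStar y) (primeStar x)) ∧
    (∀ o o' : A, CompletelyJoinIrreducible o → CompletelyJoinIrreducible o' →
      o ≤ rt → primePre o o' → o' ≤ rt) ∧
    (∀ a : A, CompletelyJoinIrreducible a → CompletelyJoinIrreducible (primeStar a)) := by
  refine ⟨?_, ?_, ?_, ?_, ?_, ?_, ?_⟩
  · intro x hx
    exact le_primePre hx le_rfl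
  · intro x y u v _ _ _ _ hxy hr
    exact hr.trans (fus_mono_left u (primePre_le hxy))
  · intro x y u v _ _ _ _ hxy hr
    exact hr.trans (fus_mono_right u (primePre_le hxy))
  · intro x y u v _ _ _ _ hxy hr
    exact (primePre_le hxy).trans hr
  · intro x y hx _ hxy
    exact le_primePre (cji_primeStar hx) (primeStar_antitone (primePre_le hxy))
  · intro o o' _ _ ho hoo'
    exact (primePre_le hoo').trans ho
  · intro a ha
    exact cji_primeStar ha
end

section
/- Let F = (W, O, R, *) be a Routley–Meyer frame. The formula (p → q) ∧ (q → r) → (p → r) is valid in F if and only if for all x, y, z ∈ W, R x y z implies there exists w ∈ W with R x y w and R x w z. -/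
/-- Formulas of the language of relevance logic. -/
inductive RForm (V : Type*) : Type _
  | var : V → RForm V
  | bot : RForm V
  | top : RForm V
  | t : RForm V
  | neg : RForm V → RForm V
  | conj : RForm V → RForm V → RForm V
  | disj : RForm V → RForm V → RForm V
  | fus : RForm V → RForm V → RForm V
  | imp : RForm V → RForm V → RForm V

/-- Truth of a formula at a point of a Routley–Meyer model. -/
def RMFrame.truth {W Vars : Type*} (F : RMFrame W) (V : Vars → Set W) :
    RForm Vars → W → Prop
  | .var p, u => u ∈ V p
  | .bot, _ => False
  | .top, _ => True
  | .t, u => u ∈ F.O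
  | .neg A, u => ¬ F.truth V A (F.star u)
  | .conj A B, u => F.truth V A u ∧ F.truth V B u
  | .disj A B, u => F.truth V A u ∨ F.truth V B u
  | .fus A B, u => ∃ v w, F.R v w u ∧ F.truth V A v ∧ F.truth V B w
  | .imp A B, u => ∀ v w, F.R u v w → F.truth V A v → F.truth V B w

/-- Validity of a formula in a Routley–Meyer frame: truth at all normal states
of every model on the frame (valuations assign up-sets to variables). -/
def RMFrame.valid {W Vars : Type*} (F : RMFrame W) (A : RForm Vars) : Prop :=
  ∀ V : Vars → Set W, (∀ p, F.IsUpset (V p)) → ∀ o ∈ F.O, F.truth V A o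

/-- The axiom B2: `(p → q) ∧ (q → r) → (p → r)`. -/
def axiomB2 : RForm (Fin 3) :=
  .imp (.conj (.imp (.var 0) (.var 1)) (.imp (.var 1) (.var 2)))
       (.imp (.var 0) (.var 2))

/-- `(p → q) ∧ (q → r) → (p → r)` is valid in a Routley–Meyer
frame iff for all `x, y, z`, `R x y z` implies there is `w` with `R x y w`
and `R x w z`. -/
theorem axiomB2_correspondence {W : Type*} [Nonempty W] (F : RMFrame W) :
    F.valid axiomB2 ↔
      ∀ x y z : W, F.R x y z → ∃ w : W, F.R x y w ∧ F.R x w z := by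
  constructor
  · intro hval x y z hxyz
    obtain ⟨o, ho, hoxx⟩ := F.cond1 x
    let V0 : Set W := {u | F.pre y u}
    let V1 : Set W := {u | ∃ w, F.R x y w ∧ F.pre w u}
    let V2 : Set W := {u | ∃ v ∈ V1, F.R x v u}
    let V : Fin 3 → Set W := ![V0, V1, V2]
    have hup : ∀ p, F.IsUpset (V p) := by
      intro p
      fin_cases p
      · intro u v hu huv
        obtain ⟨o', ho', h⟩ := hu
        exact ⟨o', ho', F.cond4 u v o' y huv h⟩
      · rintro u v ⟨w, hw, o', ho', h⟩ huv
        exact ⟨w, hw, o', ho', F.cond4 u v o' w huv h⟩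
      · rintro u v ⟨v1, hv1, h⟩ huv
        exact ⟨v1, hv1, F.cond4 u v x v1 huv h⟩
    have hmain := hval V hup o ho
    have hA : ∀ v w, F.R x v w → v ∈ V0 → w ∈ V1 := by
      intro v w h hv
      refine ⟨w, F.cond3 y v x w hv h, ?_⟩
      obtain ⟨o', ho', h'⟩ := F.cond1 w
      exact ⟨o', ho', h'⟩
    have hB : ∀ v w, F.R x v w → v ∈ V1 → w ∈ V2 :=
      fun v w h hv => ⟨v, hv, h⟩
    have hy0 : y ∈ V0 := by
      obtain ⟨o', ho', h'⟩ := F.cond1 y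
      exact ⟨o', ho', h'⟩
    have hz : z ∈ V2 := hmain x x hoxx ⟨hA, hB⟩ y z hxyz hy0
    obtain ⟨v1, ⟨w0, hxyw0, hprew0v1⟩, hxv1z⟩ := hz
    exact ⟨w0, hxyw0, F.cond3 w0 v1 x z hprew0v1 hxv1z⟩
  · intro hcond V hup o ho
    rintro u1 u2 hR ⟨h1, h2⟩ a b hab ha
    have hu12 : F.pre u1 u2 := ⟨o, ho, hR⟩
    have hab' : F.R u1 a b := F.cond2 u1 u2 a b hu12 hab
    obtain ⟨w, h1w, h2w⟩ := hcond u1 a b hab'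
    exact h2 w b h2w (h1 a w h1w ha)
end
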